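/- For λ ∈ ℝ, let S_j(λ) be the matrix equal to the identity except in row j, where the diagonal entry is -1 and off-diagonal entries are λ. If j ≠ k and S_j(λ)·S_k(λ)^⊥-type commutation S_j(λ)S_k^⊥ = S_k^⊥S_j(λ) holds (with S_k^⊥ := I + 2𝟙e_k^T - 4e_k e_k^T), then λ = 2/(n-1). -/
import Mathlib


open Matrix

/-- Descartes quadratic form matrix in dimension `n`. -/
noncomputable def QD (n : ℕ) : Matrix (Fin (n+2)) (Fin (n+2)) ℝ :=
  1 - (n : ℝ)⁻¹ • Matrix.of (fun _ _ => (1 : ℝ))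

/-- Wilker quadratic form matrix in dimension `n`. -/
def QW (n : ℕ) : Matrix (Fin (n+2)) (Fin (n+2)) ℝ :=
  Matrix.of (fun i j =>
    if (i = 0 ∧ j = 1) ∨ (i = 1 ∧ j = 0) then (-4 : ℝ)
    else if i = j then (if 2 ≤ (i : ℕ) then 2 else 0) else 0)

/-- Apollonian group generator `S j` in dimension `n`. -/
noncomputable def S (n : ℕ) (j : Fin (n+2)) : Matrix (Fin (n+2)) (Fin (n+2)) ℝ :=
  Matrix.of (fun i k =>
    if i = j then (if k = j then -1 else 2 / ((n : ℝ) - 1))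
    else if i = k then 1 else 0)

/-- Dual Apollonian group generator `S j ^⊥` in dimension `n`. -/
def Sperp (n : ℕ) (j : Fin (n+2)) : Matrix (Fin (n+2)) (Fin (n+2)) ℝ :=
  Matrix.of (fun i k =>
    if k = j then (if i = j then -1 else 2)
    else if i = k then 1 else 0)

/-- The generalized generator `S j (λ)`: identity except in row `j`, where the
diagonal entry is `-1` and the off-diagonal entries are `λ`. -/
def Sgen (n : ℕ) (lam : ℝ) (j : Fin (n+2)) : Matrix (Fin (n+2)) (Fin (n+2)) ℝ :=
  Matrix.of (fun i k =>
    if i = j then (if k = j then -1 else lam)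
    else if i = k then 1 else 0)

theorem comm_forces_lambda (n : ℕ) (hn : 2 ≤ n) (lam : ℝ)
    (j k : Fin (n+2)) (hjk : j ≠ k)
    (hcomm : Sgen n lam j * Sperp n k = Sperp n k * Sgen n lam j) :
    lam = 2 / ((n : ℝ) - 1) := by
  have h := congrFun (congrFun hcomm j) k
  have hL : (Sgen n lam j * Sperp n k) j k = -2 + (2*(n:ℝ) - 1)*lam := by
    rw [Matrix.mul_apply]
    have key : ∀ l : Fin (n+2), Sgen n lam j j l * Sperp n k l k =
        2*lam + ((if l = j then (-2 - 2*lam) else 0) + (if l = k then (-3*lam) else 0)) := by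
      intro l
      simp only [Sgen, Sperp, Matrix.of_apply, if_pos rfl]
      by_cases h1 : l = j
      · subst h1
        simp [hjk]
        try ring
      · by_cases h2 : l = k
        · subst h2
          simp [h1]
          try ring
        · simp [h1, h2]
          try ring
    rw [Finset.sum_congr rfl (fun l _ => key l)]
    rw [Finset.sum_add_distrib, Finset.sum_add_distrib, Finset.sum_const,
      Finset.sum_ite_eq' Finset.univ j (fun _ => (-2 - 2*lam)),
      Finset.sum_ite_eq' Finset.univ k (fun _ => (-3*lam))]
    simp [Finset.card_univ]
    ring
  have hR : (Sperp n k * Sgen n lam j) j k = lam + 2 := by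
    rw [Matrix.mul_apply]
    have key : ∀ l : Fin (n+2), Sperp n k j l * Sgen n lam j l k =
        (if l = j then lam else 0) + (if l = k then 2 else 0) := by
      intro l
      simp only [Sgen, Sperp, Matrix.of_apply]
      by_cases h1 : l = j
      · subst h1
        simp [hjk, Ne.symm hjk]
      · by_cases h2 : l = k
        · subst h2
          simp [h1, Ne.symm h1, hjk.symm]
        · simp [h1, h2, Ne.symm h1]
    rw [Finset.sum_congr rfl (fun l _ => key l)]
    rw [Finset.sum_add_distrib,
      Finset.sum_ite_eq' Finset.univ j (fun _ => lam),
      Finset.sum_ite_eq' Finset.univ k (fun _ => (2:ℝ))]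
    simp
  rw [hL, hR] at h
  have hn' : (1:ℝ) ≤ (n:ℝ) - 1 := by
    have : (2:ℝ) ≤ (n:ℝ) := by exact_mod_cast hn
    linarith
  have hne : (n:ℝ) - 1 ≠ 0 := by linarith
  field_simp
  linarith [h]
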